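/- Let T be a p-string of length n ≥ 1 ending with a sentinel symbol $ ∈ Σ that occurs nowhere else in T. Then the number of Type 1 nodes, i.e., elements of PrevSub(T) that are leaves or branching, is at most 2n. -/

import Mathlib

open List

variable {σ π : Type*}

/-- The prev-encoding symbol of `w` at (0-indexed) position `i`:
constants are kept; a parameter is encoded by the distance to its
previous occurrence, or `0` if it has no previous occurrence. -/
def prevAt [DecidableEq σ] [DecidableEq π] (w : List (σ ⊕ π)) (i : ℕ) : σ ⊕ ℕ :=
  match w[i]? with
  | some (Sum.inl a) => Sum.inl a
  | some (Sum.inr x) =>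
      let s := (Finset.range i).filter (fun j => w[j]? = some (Sum.inr x))
      if h : s.Nonempty then Sum.inr (i - s.max' h) else Sum.inr 0
  | none => Sum.inr 0

/-- The prev-encoding `⟨w⟩` of a p-string `w`. -/
def prevEncode [DecidableEq σ] [DecidableEq π] (w : List (σ ⊕ π)) : List (σ ⊕ ℕ) :=
  (List.range w.length).map (prevAt w)

/-- The `k`-re-encoding `⟨u⟩ₖ` of a pv-string `u`: a numeric symbol `u[i]`
(1-indexed) is replaced by `0` whenever `u[i] ≥ i - k + 1`. -/
def reEncode (k : ℕ) (u : List (σ ⊕ ℕ)) : List (σ ⊕ ℕ) :=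
  (List.range u.length).map (fun i =>
    match u[i]? with
    | some (Sum.inl a) => Sum.inl a
    | some (Sum.inr m) => if i + 2 ≤ m + k then Sum.inr (0 : ℕ) else Sum.inr m
    | none => Sum.inr 0)

/-- The implicit suffix link `sl(u) = ⟨u[2:]⟩₁`. -/
def sl (u : List (σ ⊕ ℕ)) : List (σ ⊕ ℕ) := reEncode 1 u.tail

/-- The set of prev-encoded substrings of `T`. -/
def PrevSub [DecidableEq σ] [DecidableEq π] (T : List (σ ⊕ π)) : Set (List (σ ⊕ ℕ)) :=
  { u | ∃ w, w <:+: T ∧ u = prevEncode w }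

/-- `u` is a leaf of `PrevSub T`: it belongs to `PrevSub T` and is not a
proper prefix of any element of `PrevSub T`. -/
def IsLeaf [DecidableEq σ] [DecidableEq π] (T : List (σ ⊕ π)) (u : List (σ ⊕ ℕ)) : Prop :=
  u ∈ PrevSub T ∧ ∀ v ∈ PrevSub T, u <+: v → u = v

/-- `u` is a branching element of `PrevSub T`: two distinct one-symbol
extensions of `u` belong to `PrevSub T`. -/
def Branching [DecidableEq σ] [DecidableEq π] (T : List (σ ⊕ π)) (u : List (σ ⊕ ℕ)) : Prop :=
  u ∈ PrevSub T ∧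
    ∃ a b : σ ⊕ ℕ, a ≠ b ∧ u ++ [a] ∈ PrevSub T ∧ u ++ [b] ∈ PrevSub T

/-!
A leaf of `PrevSub T` cannot be extended to the right, so it is the encoding of a suffix of `T`,
which is nonempty as `T` is; hence there are at most `n` leaves. For the branching nodes, order
the alphabet linearly and send a branching `u` with children `u ++ [a]`, `u ++ [b]`, `a < b`, to
the lexicographically least leaf through `u ++ [b]`. This is injective: were it to send a shorter
`u₁` and `u₂` to the same leaf `ℓ`, then `u₁ ++ [b₁]` would be a prefix of `u₂`, and a leaf
through `u₂ ++ [a₂]` would be a smaller leaf through `u₁ ++ [b₁]` than `ℓ`.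
-/

namespace List

variable {α : Type*}

def prefixLeaves (S : Set (List α)) : Set (List α) :=
  {ℓ ∈ S | ∀ v ∈ S, ℓ <+: v → ℓ = v}

def prefixBranchings (S : Set (List α)) : Set (List α) :=
  {u ∈ S | ∃ a b, a ≠ b ∧ u ++ [a] ∈ S ∧ u ++ [b] ∈ S}

variable {S : Set (List α)}

theorem exists_mem_prefixLeaves_prefix (hS : S.Finite) {u : List α} (hu : u ∈ S) :
    ∃ ℓ ∈ prefixLeaves S, u <+: ℓ := by
  obtain ⟨ℓ, ⟨hℓS, huℓ⟩, hℓmax⟩ :=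
    Set.Finite.exists_maximalFor length {v ∈ S | u <+: v}
      (hS.subset fun _ hv => hv.1) ⟨u, hu, prefix_rfl⟩
  refine ⟨ℓ, ⟨hℓS, fun v hv hℓv => ?_⟩, huℓ⟩
  exact hℓv.eq_of_length <|
    le_antisymm hℓv.length_le (hℓmax ⟨hv, huℓ.trans hℓv⟩ hℓv.length_le)

section LinearOrder

variable [LinearOrder α]

def IsUpperBranchLeaf (S : Set (List α)) (u ℓ : List α) : Prop :=
  ∃ a b, a < b ∧ u ++ [a] ∈ S ∧ IsLeast {ℓ' ∈ prefixLeaves S | u ++ [b] <+: ℓ'} ℓ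

theorem exists_isUpperBranchLeaf (hS : S.Finite) {u : List α} (hu : u ∈ prefixBranchings S) :
    ∃ ℓ, IsUpperBranchLeaf S u ℓ := by
  obtain ⟨-, a, b, hab, ha, hb⟩ := hu
  wlog hlt : a < b generalizing a b
  · exact this b a hab.symm hb ha (hab.lt_or_gt.resolve_left hlt)
  obtain ⟨ℓ, hℓ, hbℓ⟩ := exists_mem_prefixLeaves_prefix hS hb
  obtain ⟨ℓmin, hmin, hle⟩ := Set.exists_min_image {ℓ' ∈ prefixLeaves S | u ++ [b] <+: ℓ'} id
    (hS.subset fun _ h => h.1.1) ⟨ℓ, hℓ, hbℓ⟩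
  exact ⟨ℓmin, a, b, hlt, ha, hmin, hle⟩

theorem IsUpperBranchLeaf.mem_prefixLeaves {u ℓ : List α} (h : IsUpperBranchLeaf S u ℓ) :
    ℓ ∈ prefixLeaves S := by
  obtain ⟨-, -, -, -, ⟨hℓ, -⟩, -⟩ := h
  exact hℓ

theorem IsUpperBranchLeaf.eq (hS : S.Finite) {u₁ u₂ ℓ : List α}
    (h₁ : IsUpperBranchLeaf S u₁ ℓ) (h₂ : IsUpperBranchLeaf S u₂ ℓ) : u₁ = u₂ := by
  wlog hlen : u₁.length ≤ u₂.length generalizing u₁ u₂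
  · exact (this h₂ h₁ (le_of_not_ge hlen)).symm
  obtain ⟨-, b₁, -, -, ⟨-, hb₁ℓ⟩, hleast⟩ := h₁
  obtain ⟨a₂, b₂, hab₂, ha₂, ⟨-, hb₂ℓ⟩, -⟩ := h₂
  have hu₁ℓ := (prefix_append u₁ [b₁]).trans hb₁ℓ
  have hu₂ℓ := (prefix_append u₂ [b₂]).trans hb₂ℓ
  rcases hlen.eq_or_lt with heq | hlt
  · exact (prefix_of_prefix_length_le hu₁ℓ hu₂ℓ hlen).eq_of_length heq
  exfalso
  have hb₁u₂ : u₁ ++ [b₁] <+: u₂ :=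
    prefix_of_prefix_length_le hb₁ℓ hu₂ℓ (by simpa using hlt)
  obtain ⟨ℓ', hℓ', ha₂ℓ'⟩ := exists_mem_prefixLeaves_prefix hS ha₂
  have hle : ℓ ≤ ℓ' := hleast ⟨hℓ', hb₁u₂.trans ((prefix_append u₂ [a₂]).trans ha₂ℓ')⟩
  have hlt' : ℓ' < ℓ := by
    obtain ⟨r', rfl⟩ := ha₂ℓ'
    obtain ⟨r, rfl⟩ := hb₂ℓ
    simpa only [append_assoc, singleton_append] using
      append_left_lt (l₁ := u₂) (Lex.rel hab₂ : a₂ :: r' < b₂ :: r)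
  exact hlt'.not_ge hle

end LinearOrder

theorem ncard_prefixBranchings_le (hS : S.Finite) :
    (prefixBranchings S).ncard ≤ (prefixLeaves S).ncard := by
  classical
  let : LinearOrder α := IsWellOrder.linearOrder WellOrderingRel
  choose! f hf using fun u (hu : u ∈ prefixBranchings S) => exists_isUpperBranchLeaf hS hu
  exact Set.ncard_le_ncard_of_injOn f (fun u hu => (hf u hu).mem_prefixLeaves)
    (fun u₁ hu₁ u₂ hu₂ h => (hf u₁ hu₁).eq hS (h ▸ hf u₂ hu₂)) (hS.subset fun _ h => h.1)

end List

section PrevEncode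

variable [DecidableEq σ] [DecidableEq π]

theorem prevAt_append_of_lt (w v : List (σ ⊕ π)) {i : ℕ} (hi : i < w.length) :
    prevAt (w ++ v) i = prevAt w i := by
  have hget : ∀ j ≤ i, (w ++ v)[j]? = w[j]? := fun j hj =>
    getElem?_append_left (hj.trans_lt hi)
  unfold prevAt
  rw [hget i le_rfl]
  have hfilter : ∀ x : π, (Finset.range i).filter (fun j => (w ++ v)[j]? = some (Sum.inr x))
      = (Finset.range i).filter (fun j => w[j]? = some (Sum.inr x)) := fun x =>
    Finset.filter_congr fun j hj => by rw [hget j (Finset.mem_range.mp hj).le]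
  cases w[i]? with
  | none => rfl
  | some c => cases c with
    | inl a => rfl
    | inr x => simp only [hfilter x]

@[simp]
theorem length_prevEncode (w : List (σ ⊕ π)) : (prevEncode w).length = w.length := by
  simp [prevEncode]

theorem prevEncode_prefix_append (w v : List (σ ⊕ π)) :
    prevEncode w <+: prevEncode (w ++ v) := by
  rw [prefix_iff_eq_take, length_prevEncode, prevEncode, prevEncode, ← map_take, take_range,
    length_append, min_eq_left (Nat.le_add_right _ _)]
  exact map_congr_left fun i hi => (prevAt_append_of_lt w v (mem_range.mp hi)).symm

theorem prevSub_finite (T : List (σ ⊕ π)) : (PrevSub T).Finite :=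
  (T.sublists.finite_toSet.image prevEncode).subset fun _ ⟨w, hw, hu⟩ =>
    ⟨w, mem_sublists.mpr hw.sublist, hu.symm⟩

theorem exists_prevEncode_drop_eq_of_isLeaf {T : List (σ ⊕ π)} (hT : T ≠ [])
    {u : List (σ ⊕ ℕ)} (hu : IsLeaf T u) : ∃ k < T.length, prevEncode (T.drop k) = u := by
  obtain ⟨⟨w, ⟨s, t, rfl⟩, rfl⟩, hleaf⟩ := hu
  cases t with
  | cons c t =>
    have := hleaf _ ⟨_, ⟨s, t, by simp⟩, rfl⟩ (prevEncode_prefix_append w [c])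
    simpa using congrArg length this
  | nil =>
    rcases eq_or_ne w [] with rfl | hw
    · have := hleaf _ ⟨_, infix_rfl, rfl⟩ (by simp [prevEncode])
      simp_all [prevEncode]
    · exact ⟨s.length, by simpa using length_pos_iff.mpr hw, by simp⟩

theorem ncard_isLeaf_le {T : List (σ ⊕ π)} (hT : T ≠ []) :
    {u | IsLeaf T u}.ncard ≤ T.length := by
  classical
  calc {u | IsLeaf T u}.ncard
      ≤ ((Finset.range T.length).image fun k => prevEncode (T.drop k) : Set _).ncard :=
        Set.ncard_le_ncard (fun u hu => by
          obtain ⟨k, hk, rfl⟩ := exists_prevEncode_drop_eq_of_isLeaf hT hu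
          simpa using ⟨k, hk, rfl⟩) (Finset.finite_toSet _)
    _ ≤ T.length := by
      rw [Set.ncard_coe_finset]
      exact Finset.card_image_le.trans_eq (Finset.card_range _)

end PrevEncode

theorem card_type1_le_general [DecidableEq σ] [DecidableEq π]
    (T' : List (σ ⊕ π)) (d : σ) (T : List (σ ⊕ π))
    (hT : T = T' ++ [Sum.inl d]) :
    {u : List (σ ⊕ ℕ) | IsLeaf T u ∨ Branching T u}.Finite ∧
      {u : List (σ ⊕ ℕ) | IsLeaf T u ∨ Branching T u}.ncard ≤ 2 * T.length := by
  have hne : T ≠ [] := by simp [hT]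
  have hfin := prevSub_finite T
  have hsplit : {u | IsLeaf T u ∨ Branching T u} =
      prefixLeaves (PrevSub T) ∪ prefixBranchings (PrevSub T) := rfl
  rw [hsplit]
  refine ⟨hfin.subset (Set.union_subset (fun _ h => h.1) fun _ h => h.1), ?_⟩
  calc (prefixLeaves (PrevSub T) ∪ prefixBranchings (PrevSub T)).ncard
      ≤ (prefixLeaves (PrevSub T)).ncard + (prefixBranchings (PrevSub T)).ncard :=
        Set.ncard_union_le _ _
    _ ≤ T.length + T.length :=
        add_le_add (ncard_isLeaf_le hne) ((ncard_prefixBranchings_le hfin).trans (ncard_isLeaf_le hne))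
    _ = 2 * T.length := (two_mul _).symm

/-- For a text of length `n ≥ 1` ending with a sentinel occurring nowhere else,
the number of Type 1 nodes (leaves or branching elements of `PrevSub T`)
is at most `2n`. -/
theorem card_type1_le [DecidableEq σ] [DecidableEq π]
    (T' : List (σ ⊕ π)) (d : σ) (T : List (σ ⊕ π))
    (hT : T = T' ++ [Sum.inl d]) (hd : Sum.inl d ∉ T') :
    {u : List (σ ⊕ ℕ) | IsLeaf T u ∨ Branching T u}.Finite ∧
      {u : List (σ ⊕ ℕ) | IsLeaf T u ∨ Branching T u}.ncard ≤ 2 * T.length :=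
  card_type1_le_general T' d T hT
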